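/- For every non-negative integer n, the number of partitions of n satisfying Schur's condition equals the number of partitions of n into distinct parts, none of which is divisible by 3. -/

import Mathlib

/-- Two parts `a` and `b` are compatible with Schur's condition:
they are at least 3 apart, and if both are divisible by 3 they are at least 6 apart. -/
def SchurRel (a b : ℕ) : Prop :=
  (3 ≤ a - b ∨ 3 ≤ b - a) ∧ (3 ∣ a → 3 ∣ b → (6 ≤ a - b ∨ 6 ≤ b - a))

/-- A multiset of parts satisfies Schur's condition: parts are pairwise at least 3 apart,
and any two parts divisible by 3 differ by at least 6. -/
def SchurParts (s : Multiset ℕ) : Prop := s.Pairwise SchurRel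

namespace SchurProof

/-- bottom part of a pair with total index `B` (sum of the two parts is `3*B`). -/
def bott (B : ℕ) : ℕ := if B % 2 = 0 then 3*(B/2) - 1 else 3*(B/2) + 1
/-- top part of a pair with total index `B`. -/
def topp (B : ℕ) : ℕ := if B % 2 = 0 then 3*(B/2) + 1 else 3*(B/2) + 2

lemma bott_add_topp {B : ℕ} (hB : 1 ≤ B) : bott B + topp B = 3*B := by
  unfold bott topp
  rcases Nat.mod_two_eq_zero_or_one B with h | h <;> simp only [h, Nat.one_ne_zero,
    if_true, if_false] <;> omega

lemma bott_lt_topp {B : ℕ} (hB : 1 ≤ B) : bott B < topp B := by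
  unfold bott topp
  rcases Nat.mod_two_eq_zero_or_one B with h | h <;> simp only [h, Nat.one_ne_zero,
    if_true, if_false] <;> omega

lemma bott_pos {B : ℕ} (hB : 1 ≤ B) : 1 ≤ bott B := by
  unfold bott
  rcases Nat.mod_two_eq_zero_or_one B with h | h <;> simp only [h, Nat.one_ne_zero,
    if_true, if_false] <;> omega

lemma bott_strictMono {B B' : ℕ} (h : B < B') : bott B < bott B' := by
  unfold bott
  rcases Nat.mod_two_eq_zero_or_one B with h1 | h1 <;>
  rcases Nat.mod_two_eq_zero_or_one B' with h2 | h2 <;>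
  simp only [h1, h2, Nat.one_ne_zero, if_true, if_false] <;> omega

lemma not_three_dvd_bott {B : ℕ} (hB : 1 ≤ B) : ¬ 3 ∣ bott B := by
  unfold bott
  rcases Nat.mod_two_eq_zero_or_one B with h | h <;> simp only [h, Nat.one_ne_zero,
    if_true, if_false] <;> omega

lemma not_three_dvd_topp (B : ℕ) : ¬ 3 ∣ topp B := by
  unfold topp
  rcases Nat.mod_two_eq_zero_or_one B with h | h <;> simp only [h, Nat.one_ne_zero,
    if_true, if_false] <;> omega

inductive Letter
  | S (x : ℕ)
  | P (b : ℕ)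
deriving DecidableEq

open Letter

/-- realize a list of letters starting at height `c` into an ascending list of parts -/
def realize : List Letter → ℕ → List ℕ
  | [], _ => []
  | S x :: M, c => (x + 3*c) :: realize M (c+1)
  | P b :: M, c => bott (b+c) :: topp (b+c) :: realize M (c+1)

/-- the criterion: single `y` can sit (at height `c`) directly below pair `b` (at height `c+1`) -/
def Below (y b c : ℕ) : Prop := 2*y + 3*c + 4 + (b+c) % 2 ≤ 3*b

instance : ∀ y b c, Decidable (Below y b c) := fun _ _ _ => inferInstanceAs (Decidable (_ ≤ _))

def headOK : Letter → Prop
  | S x => 1 ≤ x ∧ ¬ 3 ∣ x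
  | P b => 1 ≤ b

/-- adjacent compatibility of two letters, the lower one at height `c` -/
def adj : Letter → Letter → ℕ → Prop
  | S y, S x, _ => y ≤ x
  | S y, P b, c => Below y b c
  | P b, S x, c => ¬ Below x b c
  | P b, P b', _ => b < b'

def valid : List Letter → ℕ → Prop
  | [], _ => True
  | [h], _ => headOK h
  | h :: h2 :: M, c => headOK h ∧ adj h h2 c ∧ valid (h2 :: M) (c+1)

lemma valid_tail {h : Letter} {M : List Letter} {c : ℕ} (hv : valid (h :: M) c) :
    valid M (c+1) := by
  cases M with
  | nil => trivial
  | cons h2 M' => exact hv.2.2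

lemma valid_head {h : Letter} {M : List Letter} {c : ℕ} (hv : valid (h :: M) c) :
    headOK h := by
  cases M with
  | nil => exact hv
  | cons h2 M' => exact hv.1

lemma valid_adj {h h2 : Letter} {M : List Letter} {c : ℕ} (hv : valid (h :: h2 :: M) c) :
    adj h h2 c := hv.2.1

lemma valid_cons {h h2 : Letter} {M : List Letter} {c : ℕ} (h1 : headOK h) (h2a : adj h h2 c)
    (hv : valid (h2 :: M) (c+1)) : valid (h :: h2 :: M) c := ⟨h1, h2a, hv⟩

def singles : List Letter → List ℕ
  | [] => []
  | S x :: M => x :: singles M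
  | P _ :: M => singles M

def pairs : List Letter → List ℕ
  | [] => []
  | S _ :: M => pairs M
  | P b :: M => b :: pairs M

/-- build the unique valid arrangement from sorted lists of singles and pairs -/
def build : List ℕ → List ℕ → ℕ → List Letter
  | [], [], _ => []
  | x :: xs, [], c => S x :: build xs [] (c+1)
  | [], b :: bs, c => P b :: build [] bs (c+1)
  | x :: xs, b :: bs, c =>
    if Below x b c then S x :: build xs (b :: bs) (c+1)
    else P b :: build (x :: xs) bs (c+1)
  termination_by xs bs _ => xs.length + bs.length

/-- all singles in a valid list are ≥ 1 and not divisible by 3; all pairs are ≥ 1 -/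
lemma valid_mem_props {L : List Letter} {c : ℕ} (hv : valid L c) :
    (∀ x ∈ singles L, 1 ≤ x ∧ ¬ 3 ∣ x) ∧ (∀ b ∈ pairs L, 1 ≤ b) := by
  induction L generalizing c with
  | nil => simp [singles, pairs]
  | cons h M ih =>
    have hh := valid_head hv
    have ht := ih (valid_tail hv)
    cases h with
    | S x =>
      refine ⟨?_, ht.2⟩
      intro y hy
      simp only [singles, List.mem_cons] at hy
      rcases hy with rfl | hy
      · exact hh
      · exact ht.1 y hy
    | P b =>
      refine ⟨ht.1, ?_⟩
      intro b' hb'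
      simp only [pairs, List.mem_cons] at hb'
      rcases hb' with rfl | hb'
      · exact hh
      · exact ht.2 b' hb'

/-- The main chain invariants of valid lists. -/
lemma valid_chain {L : List Letter} {c : ℕ} (hv : valid L c) :
    (∀ y M, L = S y :: M →
      (∀ b ∈ pairs M, 2*y + 3*c + 4 + (b+c) % 2 ≤ 3*b) ∧ (∀ x ∈ singles M, y ≤ x)) ∧
    (∀ b M, L = P b :: M →
      (∀ b' ∈ pairs M, b + 1 ≤ b') ∧ (∀ x ∈ singles M, 3*b ≤ 2*x + 3*c + 2 + (b+c) % 2)) := by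
  induction L generalizing c with
  | nil => exact ⟨fun y M h => by simp at h, fun b M h => by simp at h⟩
  | cons h M ih =>
    have ihM := ih (c := c+1) (valid_tail hv)
    constructor
    · intro y M' heq
      injection heq with e1 e2
      subst e1; subst e2
      cases M with
      | nil => exact ⟨by simp [pairs], by simp [singles]⟩
      | cons h2 M2 =>
        have hadj := valid_adj hv
        have hmem := valid_mem_props (valid_tail hv)
        cases h2 with
        | S x2 =>
          -- adj : y ≤ x2
          have hyx : y ≤ x2 := hadj
          obtain ⟨ihS, _⟩ := ihM
          have ih2 := ihS x2 M2 rfl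
          constructor
          · intro b hb
            simp only [pairs] at hb
            have := ih2.1 b hb
            omega
          · intro x hx
            simp only [singles, List.mem_cons] at hx
            rcases hx with rfl | hx
            · exact hyx
            · exact le_trans hyx (ih2.2 x hx)
        | P b2 =>
          -- adj : Below y b2 c
          have hb2 : Below y b2 c := hadj
          obtain ⟨_, ihP⟩ := ihM
          have ih2 := ihP b2 M2 rfl
          unfold Below at hb2
          constructor
          · intro b hb
            simp only [pairs, List.mem_cons] at hb
            rcases hb with rfl | hb
            · exact hb2
            · have := ih2.1 b hb
              omega
          · intro x hx
            simp only [singles] at hx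
            have hxx := ih2.2 x hx
            have hx3 : ¬ 3 ∣ x := (hmem.1 x (by simp [singles, hx])).2
            -- 2y + 3c + 4 + (b2+c)%2 ≤ 3b2 ≤ 2x + 3(c+1) + 2 + (b2+c+1)%2
            -- if equality chain forces 3 ∣ 2x + stuff contradiction
            rcases Nat.mod_two_eq_zero_or_one (b2 + c) with hp | hp
            · -- par = 0 : 2y+3c+4 ≤ 3b2 ≤ 2x+3c+5+1 = 2x+3c+6. y ≤ x+1; exclude y = x+1 via 3∣
              have hp' : (b2 + (c+1)) % 2 = 1 := by omega
              rw [hp'] at hxx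
              -- 3b2 ≤ 2x+3c+6 and 3b2 ≥ 2y+3c+4
              by_cases hyx : y ≤ x
              · exact hyx
              · exfalso
                -- y ≥ x+1 so 3b2 = 2x+3c+6 forced, hence 3 ∣ 2x ⇒ 3 ∣ x
                have h1 : 3*b2 = 2*x + 3*c + 6 := by omega
                omega
            · have hp' : (b2 + (c+1)) % 2 = 0 := by omega
              rw [hp'] at hxx
              rw [hp] at hb2
              omega
    · intro b M' heq
      injection heq with e1 e2
      subst e1; subst e2
      cases M with
      | nil => exact ⟨by simp [pairs], by simp [singles]⟩
      | cons h2 M2 =>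
        have hadj := valid_adj hv
        have hmem := valid_mem_props (valid_tail hv)
        cases h2 with
        | S x2 =>
          -- adj : ¬ Below x2 b c, i.e. 3b ≤ 2x2+3c+3+(b+c)%2, parity refine to +2
          have hnb : ¬ Below x2 b c := hadj
          unfold Below at hnb
          push_neg at hnb
          have hx23 : ¬ 3 ∣ x2 := (valid_head (valid_tail hv)).2
          have hbase : 3*b ≤ 2*x2 + 3*c + 2 + (b+c) % 2 := by
            rcases Nat.mod_two_eq_zero_or_one (b + c) with hp | hp <;> rw [hp] at hnb ⊢
            · -- 3b ≤ 2x2+3c+3; exclude equality via 3∣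
              by_cases h3 : 3*b ≤ 2*x2 + 3*c + 2
              · exact h3
              · exfalso; omega
            · omega
          obtain ⟨ihS, _⟩ := ihM
          have ih2 := ihS x2 M2 rfl
          constructor
          · intro b' hb'
            simp only [pairs] at hb'
            have h4 := ih2.1 b' hb'
            -- 3b' ≥ 2x2 + 3(c+1) + 4 ≥ (3b - 3c - 2 - par) + 3c + 7 = 3b + 5 - par
            have : 3*b + 4 ≤ 3*b' := by omega
            omega
          · intro x hx
            simp only [singles, List.mem_cons] at hx
            rcases hx with rfl | hx
            · exact hbase
            · have := ih2.2 x hx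
              omega
        | P b2 =>
          have hbb : b < b2 := hadj
          obtain ⟨_, ihP⟩ := ihM
          have ih2 := ihP b2 M2 rfl
          constructor
          · intro b' hb'
            simp only [pairs, List.mem_cons] at hb'
            rcases hb' with rfl | hb'
            · omega
            · have := ih2.1 b' hb'
              omega
          · intro x hx
            simp only [singles] at hx
            have hxx := ih2.2 x hx
            have hx3 : ¬ 3 ∣ x := (hmem.1 x (by simp [singles, hx])).2
            -- 3b ≤ 3b2 - 3 ≤ 2x + 3c + 2 + (b2+c+1)%2; parity fix
            rcases Nat.mod_two_eq_zero_or_one (b2 + (c+1)) with hp | hp <;> rw [hp] at hxx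
            · omega
            · rcases Nat.mod_two_eq_zero_or_one (b + c) with hq | hq <;> rw [hq]
              · -- need 3b ≤ 2x+3c+2, have 3b+3 ≤ 3b2 ≤ 2x+3c+6 so 3b ≤ 2x+3c+3; exclude =
                by_cases h3 : 3*b ≤ 2*x + 3*c + 2
                · exact h3
                · exfalso; omega
              · omega


lemma singles_sorted {L : List Letter} {c : ℕ} (hv : valid L c) :
    List.Pairwise (· ≤ ·) (singles L) := by
  induction L generalizing c with
  | nil => simp [singles]
  | cons h M ih =>
    have ihM := ih (valid_tail hv)
    cases h with
    | S y =>
      simp only [singles, List.pairwise_cons]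
      exact ⟨((valid_chain hv).1 y M rfl).2, ihM⟩
    | P b => exact ihM

lemma pairs_sorted {L : List Letter} {c : ℕ} (hv : valid L c) :
    List.Pairwise (· < ·) (pairs L) := by
  induction L generalizing c with
  | nil => simp [pairs]
  | cons h M ih =>
    have ihM := ih (valid_tail hv)
    cases h with
    | S y => exact ihM
    | P b =>
      simp only [pairs, List.pairwise_cons]
      refine ⟨fun b' hb' => ?_, ihM⟩
      have := ((valid_chain hv).2 b M rfl).1 b' hb'
      omega

lemma build_singles (xs bs : List ℕ) (c : ℕ) :
    singles (build xs bs c) = xs ∧ pairs (build xs bs c) = bs := by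
  induction xs, bs, c using build.induct with
  | case1 => simp [build, singles, pairs]
  | case2 x xs c ih => simp [build, singles, pairs, ih]
  | case3 b bs c ih => simp [build, singles, pairs, ih]
  | case4 x xs b bs c hb ih => simp [build, hb, singles, pairs, ih]
  | case5 x xs b bs c hb ih => simp [build, hb, singles, pairs, ih]

lemma build_reconstruct {L : List Letter} {c : ℕ} (hv : valid L c) :
    build (singles L) (pairs L) c = L := by
  induction L generalizing c with
  | nil => simp [singles, pairs, build]
  | cons h M ih =>
    have ihM := ih (valid_tail hv)
    cases h with
    | S y =>
      simp only [singles, pairs]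
      cases hM : pairs M with
      | nil => rw [hM] at ihM; simp [build, ihM]
      | cons b0 rest =>
        have hb0 : Below y b0 c := by
          have := ((valid_chain hv).1 y M rfl).1 b0 (by rw [hM]; exact List.mem_cons_self)
          exact this
        rw [hM] at ihM
        simp [build, hb0, ihM]
    | P b =>
      simp only [singles, pairs]
      cases hM : singles M with
      | nil => rw [hM] at ihM; cases hP : pairs M with
        | nil => rw [hP] at ihM; simp [build, ihM]
        | cons b2 rest => rw [hP] at ihM; simp [build, ihM]
      | cons y0 rest =>
        have hnb : ¬ Below y0 b c := by
          have := ((valid_chain hv).2 b M rfl).2 y0 (by rw [hM]; exact List.mem_cons_self)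
          unfold Below
          omega
        rw [hM] at ihM
        simp [build, hnb, ihM]


lemma build_valid (xs bs : List ℕ) (c : ℕ) :
    xs.Pairwise (· ≤ ·) → (∀ x ∈ xs, 1 ≤ x ∧ ¬ 3 ∣ x) → bs.Pairwise (· < ·) → (∀ b ∈ bs, 1 ≤ b) →
    valid (build xs bs c) c := by
  induction xs, bs, c using build.induct with
  | case1 c =>
    intro _ _ _ _; simp [build, valid]
  | case2 x xs c ih =>
    intro h1 h2 h3 h4
    have hok : headOK (Letter.S x) := h2 x (List.mem_cons_self)
    have ih' := ih (List.pairwise_cons.mp h1).2 (fun a ha => h2 a (List.mem_cons_of_mem _ ha)) h3 h4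
    cases xs with
    | nil => simpa [build, valid] using hok
    | cons x2 xs2 =>
      rw [show build (x::x2::xs2) [] c = Letter.S x :: build (x2::xs2) [] (c+1) by simp [build]]
      rw [show build (x2::xs2) [] (c+1) = Letter.S x2 :: build xs2 [] (c+2) by simp [build]] at ih' ⊢
      exact valid_cons hok ((List.pairwise_cons.mp h1).1 x2 (List.mem_cons_self)) ih'
  | case3 b bs c ih =>
    intro h1 h2 h3 h4
    have hok : headOK (Letter.P b) := h4 b (List.mem_cons_self)
    have ih' := ih h1 h2 (List.pairwise_cons.mp h3).2 (fun a ha => h4 a (List.mem_cons_of_mem _ ha))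
    cases bs with
    | nil => simpa [build, valid] using hok
    | cons b2 bs2 =>
      rw [show build [] (b::b2::bs2) c = Letter.P b :: build [] (b2::bs2) (c+1) by simp [build]]
      rw [show build [] (b2::bs2) (c+1) = Letter.P b2 :: build [] bs2 (c+2) by simp [build]] at ih' ⊢
      exact valid_cons hok ((List.pairwise_cons.mp h3).1 b2 (List.mem_cons_self)) ih'
  | case4 x xs b bs c hb ih =>
    intro h1 h2 h3 h4
    have hok : headOK (Letter.S x) := h2 x (List.mem_cons_self)
    have ih' := ih (List.pairwise_cons.mp h1).2 (fun a ha => h2 a (List.mem_cons_of_mem _ ha)) h3 h4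
    rw [show build (x::xs) (b::bs) c = Letter.S x :: build xs (b::bs) (c+1) by
      simp [build, hb]]
    cases xs with
    | nil =>
      rw [show build [] (b::bs) (c+1) = Letter.P b :: build [] bs (c+2) by simp [build]] at ih' ⊢
      exact valid_cons hok hb ih'
    | cons x2 xs2 =>
      by_cases hb2 : Below x2 b (c+1)
      · rw [show build (x2::xs2) (b::bs) (c+1) = Letter.S x2 :: build xs2 (b::bs) (c+2) by
          simp [build, hb2]] at ih' ⊢
        exact valid_cons hok ((List.pairwise_cons.mp h1).1 x2 (List.mem_cons_self)) ih'
      · rw [show build (x2::xs2) (b::bs) (c+1) = Letter.P b :: build (x2::xs2) bs (c+2) by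
          simp [build, hb2]] at ih' ⊢
        exact valid_cons hok hb ih'
  | case5 x xs b bs c hb ih =>
    intro h1 h2 h3 h4
    have hok : headOK (Letter.P b) := h4 b (List.mem_cons_self)
    have ih' := ih h1 h2 (List.pairwise_cons.mp h3).2 (fun a ha => h4 a (List.mem_cons_of_mem _ ha))
    rw [show build (x::xs) (b::bs) c = Letter.P b :: build (x::xs) bs (c+1) by
      simp [build, hb]]
    cases bs with
    | nil =>
      rw [show build (x::xs) [] (c+1) = Letter.S x :: build xs [] (c+2) by simp [build]] at ih' ⊢
      exact valid_cons hok hb ih'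
    | cons b2 bs2 =>
      by_cases hb2 : Below x b2 (c+1)
      · rw [show build (x::xs) (b2::bs2) (c+1) = Letter.S x :: build xs (b2::bs2) (c+2) by
          simp [build, hb2]] at ih' ⊢
        exact valid_cons hok hb ih'
      · rw [show build (x::xs) (b2::bs2) (c+1) = Letter.P b2 :: build (x::xs) bs2 (c+2) by
          simp [build, hb2]] at ih' ⊢
        exact valid_cons hok ((List.pairwise_cons.mp h3).1 b2 (List.mem_cons_self)) ih'


open Letter in
/-- first element of a realization, for adjacency reasoning -/
def firstPart : List Letter → ℕ → ℕ
  | [], _ => 0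
  | S x :: _, c => x + 3*c
  | P b :: _, c => bott (b+c)

lemma realize_eq_first {L : List Letter} {c : ℕ} (hL : L ≠ []) :
    ∃ T, realize L c = firstPart L c :: T := by
  cases L with
  | nil => exact absurd rfl hL
  | cons h M => cases h <;> exact ⟨_, rfl⟩

lemma below_bott {y b c : ℕ} (h : Below y b c) : y + 3*c + 3 ≤ bott (b+(c+1)) := by
  unfold Below at h
  unfold bott
  rcases Nat.mod_two_eq_zero_or_one (b+(c+1)) with hp | hp <;>
    simp only [hp, Nat.one_ne_zero, if_true, if_false] <;> omega

lemma not_below_topp {x b c : ℕ} (h : ¬ Below x b c) (hb : 1 ≤ b) :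
    topp (b+c) + 1 ≤ x + 3*(c+1) := by
  unfold Below at h
  unfold topp
  rcases Nat.mod_two_eq_zero_or_one (b+c) with hp | hp <;>
    simp only [hp, Nat.one_ne_zero, if_true, if_false] <;> omega

lemma lt_topp_bott {b b' c : ℕ} (h : b < b') (hb : 1 ≤ b) :
    topp (b+c) + 1 ≤ bott (b'+(c+1)) := by
  unfold topp bott
  rcases Nat.mod_two_eq_zero_or_one (b+c) with hp | hp <;>
  rcases Nat.mod_two_eq_zero_or_one (b'+(c+1)) with hq | hq <;>
    simp only [hp, hq, Nat.one_ne_zero, if_true, if_false] <;> omega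

/-- adjacency across letters gives a strict gap in realized parts -/
lemma adj_firstPart {h h2 : Letter} {M : List Letter} {c : ℕ}
    (hv : valid (h :: h2 :: M) c) :
    (∀ y, h = Letter.S y → y + 3*c + 3 ≤ firstPart (h2 :: M) (c+1)) ∧
    (∀ b, h = Letter.P b → topp (b+c) < firstPart (h2 :: M) (c+1)) := by
  have hadj := valid_adj hv
  have hok2 := valid_head (valid_tail hv)
  constructor
  · rintro y rfl
    cases h2 with
    | S x =>
      have : y ≤ x := hadj
      simp only [firstPart]; omega
      
    | P b =>
      have hb : Below y b c := hadj
      have := below_bott hb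
      simp only [firstPart]; omega
  · rintro b rfl
    cases h2 with
    | S x =>
      have hnb : ¬ Below x b c := hadj
      have hb1 : 1 ≤ b := valid_head hv
      have := not_below_topp hnb hb1
      simp only [firstPart]; omega
    | P b' =>
      have hbb : b < b' := hadj
      have hb1 : 1 ≤ b := valid_head hv
      have := lt_topp_bott (c := c) hbb hb1
      simp only [firstPart]; omega

lemma realize_chain {L : List Letter} {c : ℕ} (hv : valid L c) :
    List.IsChain (· < ·) (realize L c) ∧ ∀ a ∈ realize L c, 1 ≤ a ∧ ¬ 3 ∣ a := by
  induction L generalizing c with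
  | nil => simp [realize]
  | cons h M ih =>
    have ihM := ih (valid_tail hv)
    have hok := valid_head hv
    cases h with
    | S y =>
      obtain ⟨hy1, hy3⟩ : 1 ≤ y ∧ ¬ 3 ∣ y := hok
      constructor
      · rw [show realize (S y :: M) c = (y + 3*c) :: realize M (c+1) from rfl]
        rcases eq_or_ne M [] with rfl | hM
        · simp [realize]
        · obtain ⟨T, hT⟩ := realize_eq_first (c := c+1) hM
          rw [hT]
          refine List.IsChain.cons_cons ?_ (hT ▸ ihM.1)
          obtain ⟨h2, M2, rfl⟩ := List.exists_cons_of_ne_nil hM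
          have := (adj_firstPart hv).1 y rfl
          omega
      · intro a ha
        rw [show realize (S y :: M) c = (y + 3*c) :: realize M (c+1) from rfl] at ha
        rcases List.mem_cons.mp ha with rfl | ha
        · exact ⟨by omega, by omega⟩
        · exact ihM.2 a ha
    | P b =>
      have hb1 : 1 ≤ b := hok
      have hB : 1 ≤ b + c := by omega
      constructor
      · rw [show realize (P b :: M) c = bott (b+c) :: topp (b+c) :: realize M (c+1) from rfl]
        refine List.IsChain.cons_cons (bott_lt_topp hB) ?_
        rcases eq_or_ne M [] with rfl | hM
        · simp [realize]
        · obtain ⟨T, hT⟩ := realize_eq_first (c := c+1) hM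
          rw [hT]
          refine List.IsChain.cons_cons ?_ (hT ▸ ihM.1)
          obtain ⟨h2, M2, rfl⟩ := List.exists_cons_of_ne_nil hM
          exact (adj_firstPart hv).2 b rfl
      · intro a ha
        rw [show realize (P b :: M) c = bott (b+c) :: topp (b+c) :: realize M (c+1) from rfl] at ha
        rcases List.mem_cons.mp ha with rfl | ha
        · exact ⟨bott_pos hB, not_three_dvd_bott hB⟩
        rcases List.mem_cons.mp ha with rfl | ha
        · exact ⟨by have := bott_pos hB; have := bott_lt_topp hB; omega, not_three_dvd_topp _⟩
        · exact ihM.2 a ha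

lemma realize_sum {L : List Letter} {c : ℕ} (hv : valid L c) :
    (realize L c).sum
      = (singles L).sum + 3 * (pairs L).sum + 3*c*L.length + 3 * Nat.choose L.length 2 := by
  induction L generalizing c with
  | nil => simp [realize, singles, pairs]
  | cons h M ih =>
    have ihM := ih (valid_tail hv)
    have hchoose : Nat.choose (M.length + 1) 2 = M.length + Nat.choose M.length 2 := by
      rw [Nat.choose_succ_succ', Nat.choose_one_right]
    cases h with
    | S y =>
      rw [show realize (S y :: M) c = (y + 3*c) :: realize M (c+1) from rfl]
      simp only [List.sum_cons, ihM, singles, pairs, List.length_cons]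
      rw [hchoose]
      ring
    | P b =>
      have hb1 : 1 ≤ b := valid_head hv
      rw [show realize (P b :: M) c = bott (b+c) :: topp (b+c) :: realize M (c+1) from rfl]
      simp only [List.sum_cons, ihM, singles, pairs, List.length_cons]
      rw [← Nat.add_assoc, bott_add_topp (by omega : 1 ≤ b + c), hchoose]
      ring

lemma topp_le_bott_add_two (B : ℕ) : topp B ≤ bott B + 2 := by
  unfold bott topp
  rcases Nat.mod_two_eq_zero_or_one B with hp | hp <;>
    simp only [hp, Nat.one_ne_zero, if_true, if_false] <;> omega

lemma realize_injective {L L' : List Letter} {c : ℕ} (hv : valid L c) (hv' : valid L' c)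
    (heq : realize L c = realize L' c) : L = L' := by
  induction L generalizing L' c with
  | nil =>
    cases L' with
    | nil => rfl
    | cons h' M' =>
      exfalso
      obtain ⟨T, hT⟩ := realize_eq_first (c := c) (List.cons_ne_nil h' M')
      rw [show realize ([] : List Letter) c = [] from rfl, hT] at heq
      exact nomatch heq
  | cons h M ih =>
    cases L' with
    | nil =>
      exfalso
      obtain ⟨T, hT⟩ := realize_eq_first (c := c) (List.cons_ne_nil h M)
      rw [show realize ([] : List Letter) c = [] from rfl, hT] at heq
      exact nomatch heq.symm
    | cons h' M' =>
      have key : ∀ (y b : ℕ) (N N' : List Letter), valid (Letter.S y :: N) c →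
          valid (Letter.P b :: N') c →
          realize (Letter.S y :: N) c ≠ realize (Letter.P b :: N') c := by
        intro y b N N' hvy hvb hE
        rw [show realize (Letter.S y :: N) c = (y + 3*c) :: realize N (c+1) from rfl,
          show realize (Letter.P b :: N') c
            = bott (b+c) :: topp (b+c) :: realize N' (c+1) from rfl] at hE
        injection hE with e1 e2
        -- realize N (c+1) = topp (b+c) :: ..., so N ≠ [] and firstPart N (c+1) = topp (b+c)
        have hN : N ≠ [] := by
          intro hnil
          rw [hnil, show realize ([] : List Letter) (c+1) = [] from rfl] at e2
          exact nomatch e2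
        obtain ⟨h2, N2, rfl⟩ := List.exists_cons_of_ne_nil hN
        obtain ⟨T, hT⟩ := realize_eq_first (L := h2 :: N2) (c := c+1) (List.cons_ne_nil _ _)
        rw [hT] at e2
        injection e2 with e3 _
        have hgap := (adj_firstPart hvy).1 y rfl
        have htb := topp_le_bott_add_two (b+c)
        omega
      cases h with
      | S y =>
        cases h' with
        | S y' =>
          rw [show realize (Letter.S y :: M) c = (y + 3*c) :: realize M (c+1) from rfl,
            show realize (Letter.S y' :: M') c = (y' + 3*c) :: realize M' (c+1) from rfl] at heq
          injection heq with e1 e2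
          have : y = y' := by omega
          subst this
          rw [ih (valid_tail hv) (valid_tail hv') e2]
        | P b' => exact absurd heq (key y b' M M' hv hv')
      | P b =>
        cases h' with
        | S y' => exact absurd heq.symm (key y' b M' M hv' hv)
        | P b' =>
          rw [show realize (Letter.P b :: M) c
              = bott (b+c) :: topp (b+c) :: realize M (c+1) from rfl,
            show realize (Letter.P b' :: M') c
              = bott (b'+c) :: topp (b'+c) :: realize M' (c+1) from rfl] at heq
          injection heq with e1 e2
          injection e2 with e2 e3
          have : b = b' := by
            rcases lt_trichotomy b b' with hlt | heq' | hlt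
            · exact absurd e1 (Nat.ne_of_lt (bott_strictMono (by omega)))
            · exact heq'
            · exact absurd e1.symm (Nat.ne_of_lt (bott_strictMono (by omega)))
          subst this
          rw [ih (valid_tail hv) (valid_tail hv') e3]


lemma bott_below {y b c : ℕ} (hb : 1 ≤ b) (h : y + 3*c + 3 ≤ bott (b+(c+1))) : Below y b c := by
  unfold bott at h
  unfold Below
  rcases Nat.mod_two_eq_zero_or_one (b+(c+1)) with hp | hp <;>
    rw [hp] at h <;> simp only [Nat.one_ne_zero, if_true, if_false] at h <;> omega

lemma topp_not_below {x b c : ℕ} (hb : 1 ≤ b) (h : topp (b+c) + 1 ≤ x + 3*(c+1)) :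
    ¬ Below x b c := by
  unfold topp at h
  unfold Below
  rcases Nat.mod_two_eq_zero_or_one (b+c) with hp | hp <;>
    rw [hp] at h <;> simp only [Nat.one_ne_zero, if_true, if_false] at h <;> omega

lemma topp_bott_lt {b b' c : ℕ} (hb : 1 ≤ b) (hb' : 1 ≤ b')
    (h : topp (b+c) + 1 ≤ bott (b'+(c+1))) : b < b' := by
  unfold topp bott at h
  rcases Nat.mod_two_eq_zero_or_one (b+c) with hp | hp <;>
  rcases Nat.mod_two_eq_zero_or_one (b'+(c+1)) with hq | hq <;>
    rw [hp, hq] at h <;> simp only [Nat.one_ne_zero, if_true, if_false] at h <;> omega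

lemma pair_decompose {a r c : ℕ} (ha : 3*c + 1 ≤ a) (h3a : ¬ 3 ∣ a) (h3r : ¬ 3 ∣ r)
    (hlt : a < r) (hle : r ≤ a + 2) :
    ∃ b, 1 ≤ b ∧ c + 1 ≤ b + c ∧ bott (b+c) = a ∧ topp (b+c) = r := by
  rcases (by omega : r = a + 1 ∨ r = a + 2) with rfl | rfl
  · have hmod : a % 3 = 1 := by omega
    have hB : 2*(a/3) + 1 - c + c = 2*(a/3) + 1 := by omega
    refine ⟨2*(a/3) + 1 - c, by omega, by omega, ?_, ?_⟩
    · simp only [bott]; rw [hB]; split <;> omega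
    · simp only [topp]; rw [hB]; split <;> omega
  · have hmod : a % 3 = 2 := by omega
    have hB : 2*(a/3) + 2 - c + c = 2*(a/3) + 2 := by omega
    refine ⟨2*(a/3) + 2 - c, by omega, by omega, ?_, ?_⟩
    · simp only [bott]; rw [hB]; split <;> omega
    · simp only [topp]; rw [hB]; split <;> omega

lemma parse_exists : ∀ (n : ℕ) (l : List ℕ), l.length ≤ n → ∀ (c : ℕ),
    List.Pairwise (· < ·) l →
    (∀ a ∈ l, 3*c + 1 ≤ a ∧ ¬ 3 ∣ a) → ∃ L, valid L c ∧ realize L c = l := by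
  intro n
  induction n with
  | zero =>
    intro l hl c _ _
    have hnil : l = [] := List.length_eq_zero_iff.mp (Nat.le_zero.mp hl)
    subst hnil
    exact ⟨[], trivial, rfl⟩
  | succ n ih =>
    intro l hl c hpw hmem
    cases l with
    | nil => exact ⟨[], trivial, rfl⟩
    | cons a rest =>
      obtain ⟨ha1, ha3⟩ := hmem a (List.mem_cons_self)
      have hrests : ∀ a' ∈ rest, a < a' := fun a' h => (List.pairwise_cons.mp hpw).1 a' h
      cases rest with
      | nil =>
        refine ⟨[Letter.S (a - 3*c)], ⟨by omega, by omega⟩, ?_⟩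
        rw [show realize [Letter.S (a-3*c)] c = (a - 3*c + 3*c) :: realize [] (c+1) from rfl]
        simp [realize]
        omega
      | cons r rest2 =>
        have hr := hmem r (by simp)
        have har : a < r := hrests r (by simp)
        by_cases hgap : a + 3 ≤ r
        · -- single
          obtain ⟨L', hv', hr'⟩ := ih (r :: rest2) (by simp at hl ⊢; omega) (c+1)
            (List.pairwise_cons.mp hpw).2
            (by
              intro a' ha'
              have h1 := hmem a' (List.mem_cons_of_mem _ ha')
              have h2 : r ≤ a' ∨ r = a' := by
                rcases List.mem_cons.mp ha' with rfl | h
                · right; rfl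
                · left; exact le_of_lt ((List.pairwise_cons.mp
                    (List.pairwise_cons.mp hpw).2).1 a' h)
              constructor
              · omega
              · exact h1.2)
          refine ⟨Letter.S (a - 3*c) :: L', ?_, ?_⟩
          · -- validity
            have hok : headOK (Letter.S (a - 3*c)) := ⟨by omega, by omega⟩
            cases L' with
            | nil =>
              exfalso
              rw [show realize ([] : List Letter) (c+1) = [] from rfl] at hr'
              exact nomatch hr'
            | cons h2 M2 =>
              refine valid_cons hok ?_ hv'
              obtain ⟨T, hT⟩ := realize_eq_first (L := h2 :: M2) (c := c+1)
                (List.cons_ne_nil _ _)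
              rw [hT] at hr'
              have hfp : firstPart (h2 :: M2) (c+1) = r := (List.cons.injEq .. ▸ hr').1
              cases h2 with
              | S x2 =>
                have : x2 + 3*(c+1) = r := by rw [← hfp]; rfl
                show (a - 3*c) ≤ x2
                omega
              | P b2 =>
                have hb2 : 1 ≤ b2 := valid_head hv'
                have : bott (b2 + (c+1)) = r := by rw [← hfp]; rfl
                show Below (a - 3*c) b2 c
                exact bott_below hb2 (by omega)
          · have hac : a - 3*c + 3*c = a := by omega
            rw [show realize (Letter.S (a-3*c) :: L') c
                = (a - 3*c + 3*c) :: realize L' (c+1) from rfl, hr', hac]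
        · -- pair
          obtain ⟨b, hb1, hbc, hbott, htopp⟩ := pair_decompose ha1 ha3 hr.2 har (by omega)
          have hpw2 : List.Pairwise (· < ·) rest2 :=
            (List.pairwise_cons.mp (List.pairwise_cons.mp hpw).2).2
          obtain ⟨L', hv', hr'⟩ := ih rest2 (by simp at hl ⊢; omega) (c+1)
            hpw2
            (by
              intro a' ha'
              have h1 := hmem a' (by simp [ha'])
              have h2 : r < a' := (List.pairwise_cons.mp
                  (List.pairwise_cons.mp hpw).2).1 a' ha'
              refine ⟨?_, h1.2⟩
              -- a' > r ≥ a+1 ≥ 3c+2, exclude 3c+3 by nondiv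
              have := h1.2
              omega)
          refine ⟨Letter.P b :: L', ?_, ?_⟩
          · have hok : headOK (Letter.P b) := hb1
            cases L' with
            | nil => exact hok
            | cons h2 M2 =>
              refine valid_cons hok ?_ hv'
              obtain ⟨T, hT⟩ := realize_eq_first (L := h2 :: M2) (c := c+1)
                (List.cons_ne_nil _ _)
              rw [hT] at hr'
              have hne : rest2 ≠ [] := by
                intro hn; rw [hn] at hr'; exact nomatch hr'
              obtain ⟨r2, rest3, rfl⟩ := List.exists_cons_of_ne_nil hne
              have hfp : firstPart (h2 :: M2) (c+1) = r2 := (List.cons.injEq .. ▸ hr').1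
              have hrr2 : r < r2 := (List.pairwise_cons.mp
                  (List.pairwise_cons.mp hpw).2).1 r2 (by simp)
              cases h2 with
              | S x2 =>
                have hx2 : x2 + 3*(c+1) = r2 := by rw [← hfp]; rfl
                show ¬ Below x2 b c
                exact topp_not_below hb1 (by omega)
              | P b2 =>
                have hb2 : 1 ≤ b2 := valid_head hv'
                have hx2 : bott (b2 + (c+1)) = r2 := by rw [← hfp]; rfl
                show b < b2
                exact topp_bott_lt (c := c) hb1 hb2 (by omega)
          · rw [show realize (Letter.P b :: L') c
                = bott (b+c) :: topp (b+c) :: realize L' (c+1) from rfl, hr', hbott, htopp]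


lemma singles_pairs_length (L : List Letter) :
    (singles L).length + (pairs L).length = L.length := by
  induction L with
  | nil => simp [singles, pairs]
  | cons h M ih => cases h <;> simp [singles, pairs] <;> omega

/-- The intermediate set: pairs (α, β) of sorted part data. -/
def YCond (n : ℕ) (ab : List ℕ × List ℕ) : Prop :=
  ab.1.Pairwise (· ≤ ·) ∧ (∀ x ∈ ab.1, 1 ≤ x ∧ ¬ 3 ∣ x) ∧ ab.2.Pairwise (· < ·) ∧
    (∀ b ∈ ab.2, 1 ≤ b) ∧
    ab.1.sum + 3 * ab.2.sum + 3 * Nat.choose (ab.1.length + ab.2.length) 2 = n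

lemma realize_sorted_lt {L : List Letter} (hv : valid L 0) :
    List.Pairwise (· < ·) (realize L 0) :=
  List.isChain_iff_pairwise.mp (realize_chain hv).1

/-- the function from Y data to distinct-nondiv3 partitions -/
def yToD (n : ℕ) (ab : {ab : List ℕ × List ℕ // YCond n ab}) :
    {p : n.Partition // p.parts.Nodup ∧ ∀ x ∈ p.parts, ¬ 3 ∣ x} :=
  have hv : valid (build ab.1.1 ab.1.2 0) 0 :=
    build_valid _ _ _ ab.2.1 ab.2.2.1 ab.2.2.2.1 ab.2.2.2.2.1
  ⟨⟨(realize (build ab.1.1 ab.1.2 0) 0 : List ℕ),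
    by
      intro i hi
      have := ((realize_chain hv).2 i (by exact_mod_cast hi)).1
      omega,
    by
      rw [Multiset.sum_coe, realize_sum hv]
      obtain ⟨hs, hp⟩ := build_singles ab.1.1 ab.1.2 0
      rw [hs, hp, show (build ab.1.1 ab.1.2 0).length = ab.1.1.length + ab.1.2.length by
        rw [← singles_pairs_length (build ab.1.1 ab.1.2 0), hs, hp]]
      simpa using ab.2.2.2.2.2⟩,
    by
      rw [Multiset.coe_nodup]
      exact (realize_sorted_lt hv).imp (fun h => Nat.ne_of_lt h),
    by
      intro x hx
      exact ((realize_chain hv).2 x (by exact_mod_cast hx)).2⟩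

lemma yToD_bijective (n : ℕ) : Function.Bijective (yToD n) := by
  constructor
  · rintro ⟨⟨α, β⟩, h1, h2, h3, h4, h5⟩ ⟨⟨α', β'⟩, h1', h2', h3', h4', h5'⟩ heq
    have hv : valid (build α β 0) 0 := build_valid α β 0 h1 h2 h3 h4
    have hv' : valid (build α' β' 0) 0 := build_valid α' β' 0 h1' h2' h3' h4'
    have hparts : (realize (build α β 0) 0 : Multiset ℕ)
        = (realize (build α' β' 0) 0 : Multiset ℕ) := by
      have := congrArg (fun q => q.1.parts) heq
      simpa [yToD] using this
    have s1 : List.Pairwise (· ≤ ·) (realize (build α β 0) 0) :=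
      (realize_sorted_lt hv).imp le_of_lt
    have s2 : List.Pairwise (· ≤ ·) (realize (build α' β' 0) 0) :=
      (realize_sorted_lt hv').imp le_of_lt
    have hlist : realize (build α β 0) 0 = realize (build α' β' 0) 0 :=
      List.Perm.eq_of_pairwise' s1 s2 (Multiset.coe_eq_coe.mp hparts)
    have hL : build α β 0 = build α' β' 0 := realize_injective hv hv' hlist
    have e1 : α = α' := by
      have a1 := (build_singles α β 0).1
      have a2 := (build_singles α' β' 0).1
      rw [← a1, ← a2, hL]
    have e2 : β = β' := by
      have a1 := (build_singles α β 0).2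
      have a2 := (build_singles α' β' 0).2
      rw [← a1, ← a2, hL]
    subst e1; subst e2
    rfl
  · rintro ⟨p, hnd, h3d⟩
    set l := Multiset.sort p.parts (· ≤ ·) with hl
    have hperm : (l : Multiset ℕ) = p.parts := Multiset.sort_eq _ _
    have hsorted : List.Pairwise (· ≤ ·) l := Multiset.pairwise_sort _ _
    have hnodup : l.Nodup := by
      rw [← Multiset.coe_nodup, hperm]; exact hnd
    have hpw : List.Pairwise (· < ·) l := (hsorted.and hnodup).imp (fun h => lt_of_le_of_ne h.1 h.2)
    obtain ⟨L, hvL, hrL⟩ := parse_exists l.length l le_rfl 0 hpw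
      (by
        intro a ha
        refine ⟨?_, ?_⟩
        · have : 0 < a := p.parts_pos (by rw [← hperm]; exact_mod_cast ha)
          omega
        · exact h3d a (by rw [← hperm]; exact_mod_cast ha))
    have hmem := valid_mem_props hvL
    refine ⟨⟨(singles L, pairs L), singles_sorted hvL, hmem.1, pairs_sorted hvL, hmem.2, ?_⟩, ?_⟩
    · have hsum := realize_sum hvL
      rw [hrL] at hsum
      have hlen := singles_pairs_length L
      have : (l : Multiset ℕ).sum = n := by rw [hperm]; exact p.parts_sum
      rw [Multiset.sum_coe] at this
      rw [← this, hsum, hlen]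
      ring
    · apply Subtype.ext
      apply Nat.Partition.ext
      show ((realize (build (singles L) (pairs L) 0) 0 : List ℕ) : Multiset ℕ) = p.parts
      rw [build_reconstruct hvL, hrL, hperm]


/-- adjacent Schur condition on an ascending list -/
def schurAdj (a b : ℕ) : Prop := a + 3 ≤ b ∧ (3 ∣ a → 3 ∣ b → a + 6 ≤ b)

instance : IsTrans ℕ schurAdj :=
  ⟨fun _ _ _ h1 h2 => ⟨by have := h1.1; have := h2.1; omega,
    fun _ _ => by have := h1.1; have := h2.1; omega⟩⟩

lemma schurAdj_schurRel {a b : ℕ} (h : schurAdj a b) : SchurRel a b :=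
  ⟨Or.inr (by have := h.1; omega),
   fun h3a h3b => Or.inr (by have := h.2 h3a h3b; omega)⟩

/-- no two equal parts divisible by 3 -/
def ne3 (a b : ℕ) : Prop := ¬ (3 ∣ a ∧ 3 ∣ b ∧ a = b)

lemma ne3_symm : Symmetric ne3 := by
  intro a b h hc
  exact h ⟨hc.2.1, hc.1, hc.2.2.symm⟩

lemma sorted_chain_pairwise_ne3 {l : List ℕ} (hs : List.Pairwise (· ≤ ·) l)
    (hc : List.IsChain ne3 l) : List.Pairwise ne3 l := by
  induction l with
  | nil => exact List.Pairwise.nil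
  | cons a tail ih =>
    have hst : List.Pairwise (· ≤ ·) tail := (List.pairwise_cons.mp hs).2
    have hct : List.IsChain ne3 tail := hc.tail
    refine List.pairwise_cons.mpr ⟨?_, ih hst hct⟩
    intro b hb hbad
    obtain ⟨h3a, h3b, rfl⟩ := hbad
    cases tail with
    | nil => exact absurd hb List.not_mem_nil
    | cons m rest =>
      have ham : a ≤ m := (List.pairwise_cons.mp hs).1 m (List.mem_cons_self)
      have hma : m = a := by
        rcases List.mem_cons.mp hb with rfl | hbr
        · rfl
        · have := (List.pairwise_cons.mp hst).1 a hbr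
          omega
      have hchain : ne3 a m := (List.isChain_cons_cons.mp hc).1
      exact hchain ⟨h3a, hma ▸ h3a, hma.symm⟩

/-- realization of w-data into a Schur partition list -/
def srealize : List ℕ → ℕ → List ℕ
  | [], _ => []
  | w :: ws, c => (w + 3*c) :: srealize ws (c+1)

lemma srealize_chain {w : List ℕ} {c : ℕ} (hs : List.Pairwise (· ≤ ·) w)
    (hp : List.Pairwise ne3 w) : List.IsChain schurAdj (srealize w c) := by
  induction w generalizing c with
  | nil => simp [srealize]
  | cons a tail ih =>
    have ihc := ih (List.pairwise_cons.mp hs).2 (List.pairwise_cons.mp hp).2 (c := c+1)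
    cases tail with
    | nil => simp [srealize]
    | cons m rest =>
      rw [show srealize (a :: m :: rest) c
          = (a + 3*c) :: srealize (m :: rest) (c+1) from rfl]
      rw [show srealize (m :: rest) (c+1) = (m + 3*(c+1)) :: srealize rest (c+2) from rfl] at ihc ⊢
      refine List.IsChain.cons_cons ?_ ihc
      have ham : a ≤ m := (List.pairwise_cons.mp hs).1 m (List.mem_cons_self)
      have hne : ne3 a m := (List.pairwise_cons.mp hp).1 m (List.mem_cons_self)
      unfold ne3 at hne
      constructor
      · omega
      · intro h3a h3b
        have h3a' : 3 ∣ a := by omega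
        have h3m : 3 ∣ m := by omega
        have : a ≠ m := fun h => hne ⟨h3a', h3m, h⟩
        omega

lemma srealize_sum (w : List ℕ) (c : ℕ) :
    (srealize w c).sum = w.sum + 3*c*w.length + 3 * Nat.choose w.length 2 := by
  induction w generalizing c with
  | nil => simp [srealize]
  | cons a tail ih =>
    rw [show srealize (a :: tail) c = (a + 3*c) :: srealize tail (c+1) from rfl]
    simp only [List.sum_cons, ih, List.length_cons]
    rw [Nat.choose_succ_succ' tail.length 1, Nat.choose_one_right]
    ring

lemma srealize_injective : ∀ {w w' : List ℕ} {c : ℕ},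
    srealize w c = srealize w' c → w = w' := by
  intro w
  induction w with
  | nil =>
    intro w' c h
    cases w' with
    | nil => rfl
    | cons x ws =>
      rw [show srealize (x::ws) c = (x + 3*c) :: srealize ws (c+1) from rfl] at h
      exact absurd h (fun hh => nomatch hh)
  | cons a tail ih =>
    intro w' c h
    cases w' with
    | nil =>
      rw [show srealize (a::tail) c = (a + 3*c) :: srealize tail (c+1) from rfl] at h
      exact absurd h (fun hh => nomatch hh)
    | cons a' tail' =>
      rw [show srealize (a::tail) c = (a + 3*c) :: srealize tail (c+1) from rfl,
        show srealize (a'::tail') c = (a' + 3*c) :: srealize tail' (c+1) from rfl] at h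
      injection h with e1 e2
      have : a = a' := by omega
      rw [this, ih e2]

lemma srealize_mem_pos {w : List ℕ} {c : ℕ} (hw : ∀ x ∈ w, 1 ≤ x) :
    ∀ a ∈ srealize w c, 1 ≤ a := by
  induction w generalizing c with
  | nil => simp [srealize]
  | cons x ws ih =>
    intro a ha
    rw [show srealize (x::ws) c = (x + 3*c) :: srealize ws (c+1) from rfl] at ha
    rcases List.mem_cons.mp ha with rfl | ha
    · have := hw x (List.mem_cons_self)
      omega
    · exact ih (fun y hy => hw y (List.mem_cons_of_mem _ hy)) a ha

lemma srealize_sorted {w : List ℕ} {c : ℕ} (hs : List.Pairwise (· ≤ ·) w)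
    (hp : List.Pairwise ne3 w) : List.Pairwise (· ≤ ·) (srealize w c) :=
  (List.isChain_iff_pairwise.mp (srealize_chain hs hp)).imp (fun h => by
    have := h.1; omega)

/-- staircase subtraction -/
def sparse : List ℕ → ℕ → List ℕ
  | [], _ => []
  | a :: l, c => (a - 3*c) :: sparse l (c+1)

lemma sparse_spec {l : List ℕ} {c : ℕ} (hc : List.IsChain schurAdj l)
    (hhead : ∀ a, l.head? = some a → 3*c + 1 ≤ a) :
    srealize (sparse l c) c = l ∧ (sparse l c).Pairwise (· ≤ ·) ∧
      (∀ x ∈ sparse l c, 1 ≤ x) ∧ (sparse l c).IsChain ne3 := by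
  induction l generalizing c with
  | nil => simp [sparse, srealize]
  | cons a tail ih =>
    have ha : 3*c + 1 ≤ a := hhead a rfl
    rw [show sparse (a :: tail) c = (a - 3*c) :: sparse tail (c+1) from rfl]
    cases tail with
    | nil =>
      refine ⟨?_, by simp [sparse], ?_, by simp [sparse]⟩
      · rw [show sparse ([] : List ℕ) (c+1) = [] from rfl]
        rw [show srealize [a - 3*c] c = (a - 3*c + 3*c) :: srealize [] (c+1) from rfl]
        rw [show srealize ([] : List ℕ) (c+1) = [] from rfl]
        congr 1
        omega
      · intro x hx
        simp [sparse] at hx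
        omega
    | cons m rest =>
      have hadj : schurAdj a m := (List.isChain_cons_cons.mp hc).1
      have hm : 3*(c+1) + 1 ≤ m := by have := hadj.1; omega
      obtain ⟨ih1, ih2, ih3, ih4⟩ := ih (c := c+1) (List.IsChain.tail hc)
        (fun x hx => by
          simp only [List.head?_cons, Option.some.injEq] at hx
          omega)
      rw [show sparse (m :: rest) (c+1)
          = (m - 3*(c+1)) :: sparse rest (c+2) from rfl] at ih1 ih2 ih3 ih4 ⊢
      refine ⟨?_, ?_, ?_, ?_⟩
      · rw [show srealize ((a - 3*c) :: (m - 3*(c+1)) :: sparse rest (c+2)) c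
            = (a - 3*c + 3*c) :: srealize ((m - 3*(c+1)) :: sparse rest (c+2)) (c+1) from rfl,
          ih1]
        congr 1
        omega
      · rw [List.pairwise_cons]
        refine ⟨?_, ih2⟩
        intro x hx
        have h1 : a - 3*c ≤ m - 3*(c+1) := by have := hadj.1; omega
        rcases List.mem_cons.mp hx with rfl | hx
        · exact h1
        · exact le_trans h1 (List.rel_of_pairwise_cons ih2 hx)
      · intro x hx
        rcases List.mem_cons.mp hx with rfl | hx
        · omega
        · exact ih3 x hx
      · refine List.isChain_cons_cons.mpr ⟨?_, ih4⟩
        intro hbad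
        obtain ⟨h3a, h3m, heq⟩ := hbad
        have h3a' : 3 ∣ a := by omega
        have h3m' : 3 ∣ m := by omega
        have := hadj.2 h3a' h3m'
        omega


lemma schurRel_symm : Symmetric SchurRel := by
  intro a b h
  exact ⟨h.1.elim Or.inr Or.inl, fun hb ha => ((h.2 ha hb).elim Or.inr Or.inl)⟩

lemma sum_map_three (l : List ℕ) : (l.map (fun x => 3*x)).sum = 3 * l.sum := by
  induction l with
  | nil => simp
  | cons x xs ih => simp [ih]; ring

/-- the merged w-list of a Y-element -/
def wList (ab : List ℕ × List ℕ) : List ℕ :=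
  Multiset.sort ((ab.1 : Multiset ℕ) + (ab.2.map (fun x => 3*x) : Multiset ℕ)) (· ≤ ·)

lemma wList_perm (ab : List ℕ × List ℕ) :
    (wList ab).Perm (ab.1 ++ ab.2.map (fun x => 3*x)) := by
  rw [← Multiset.coe_eq_coe]
  unfold wList
  rw [Multiset.sort_eq]
  simp

lemma wList_spec {n : ℕ} {ab : List ℕ × List ℕ} (h : YCond n ab) :
    (wList ab).Pairwise (· ≤ ·) ∧ (∀ x ∈ wList ab, 1 ≤ x) ∧ (wList ab).Pairwise ne3 ∧
      (wList ab).length = ab.1.length + ab.2.length ∧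
      (wList ab).sum = ab.1.sum + 3 * ab.2.sum := by
  obtain ⟨h1, h2, h3, h4, h5⟩ := h
  have hperm := wList_perm ab
  refine ⟨Multiset.pairwise_sort _ _, ?_, ?_, ?_, ?_⟩
  · intro x hx
    rcases List.mem_append.mp (hperm.mem_iff.mp hx) with hx | hx
    · exact (h2 x hx).1
    · obtain ⟨b, hb, rfl⟩ := List.mem_map.mp hx
      have := h4 b hb
      omega
  · refine ((wList_perm ab).pairwise_iff (fun h => ne3_symm h)).mpr ?_
    rw [List.pairwise_append]
    refine ⟨?_, ?_, ?_⟩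
    · exact h1.imp_of_mem (fun {a b} ha _ _ hbad => (h2 a ha).2 hbad.1)
    · refine List.pairwise_map.mpr (h3.imp ?_)
      intro a b hab hbad
      omega
    · intro a ha b hb hbad
      exact (h2 a ha).2 hbad.1
  · rw [hperm.length_eq, List.length_append, List.length_map]
  · rw [hperm.sum_eq, List.sum_append, sum_map_three]

/-- the function from Y data to Schur partitions -/
def yToS (n : ℕ) (ab : {ab : List ℕ × List ℕ // YCond n ab}) :
    {p : n.Partition // SchurParts p.parts} :=
  ⟨⟨(srealize (wList ab.1) 0 : List ℕ),
    by
      obtain ⟨hs, hm, hp, hlen, hsum⟩ := wList_spec ab.2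
      intro i hi
      have := srealize_mem_pos hm i (by exact_mod_cast hi)
      omega,
    by
      obtain ⟨hs, hm, hp, hlen, hsum⟩ := wList_spec ab.2
      rw [Multiset.sum_coe, srealize_sum, hsum, hlen]
      have := ab.2.2.2.2.2
      simpa using this⟩,
    by
      obtain ⟨hs, hm, hp, hlen, hsum⟩ := wList_spec ab.2
      exact ⟨srealize (wList ab.1) 0, rfl,
        (List.isChain_iff_pairwise.mp (srealize_chain hs hp)).imp schurAdj_schurRel⟩⟩

/-- keep the parts not divisible by 3 -/
def keepN : List ℕ → List ℕ
  | [] => []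
  | x :: l => if 3 ∣ x then keepN l else x :: keepN l

/-- keep the parts divisible by 3 -/
def keepD3 : List ℕ → List ℕ
  | [] => []
  | x :: l => if 3 ∣ x then x :: keepD3 l else keepD3 l

lemma keep_perm (w : List ℕ) : (keepN w ++ keepD3 w).Perm w := by
  induction w with
  | nil => simp [keepN, keepD3]
  | cons x l ih =>
    by_cases h : 3 ∣ x
    · rw [show keepN (x :: l) = keepN l by simp [keepN, h],
        show keepD3 (x :: l) = x :: keepD3 l by simp [keepD3, h]]
      exact List.perm_middle.trans (ih.cons x)
    · rw [show keepN (x :: l) = x :: keepN l by simp [keepN, h],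
        show keepD3 (x :: l) = keepD3 l by simp [keepD3, h]]
      exact (ih.cons x)

lemma keepN_sublist (w : List ℕ) : (keepN w).Sublist w := by
  induction w with
  | nil => simp [keepN]
  | cons x l ih =>
    by_cases h : 3 ∣ x
    · rw [show keepN (x :: l) = keepN l by simp [keepN, h]]
      exact ih.cons x
    · rw [show keepN (x :: l) = x :: keepN l by simp [keepN, h]]
      exact ih.cons₂ x

lemma keepD3_sublist (w : List ℕ) : (keepD3 w).Sublist w := by
  induction w with
  | nil => simp [keepD3]
  | cons x l ih =>
    by_cases h : 3 ∣ x
    · rw [show keepD3 (x :: l) = x :: keepD3 l by simp [keepD3, h]]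
      exact ih.cons₂ x
    · rw [show keepD3 (x :: l) = keepD3 l by simp [keepD3, h]]
      exact ih.cons x

lemma keepN_mem {w : List ℕ} {x : ℕ} (h : x ∈ keepN w) : x ∈ w ∧ ¬ 3 ∣ x := by
  induction w with
  | nil => simp [keepN] at h
  | cons a l ih =>
    by_cases ha : 3 ∣ a
    · rw [show keepN (a :: l) = keepN l by simp [keepN, ha]] at h
      exact ⟨List.mem_cons_of_mem _ (ih h).1, (ih h).2⟩
    · rw [show keepN (a :: l) = a :: keepN l by simp [keepN, ha]] at h
      rcases List.mem_cons.mp h with rfl | h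
      · exact ⟨List.mem_cons_self, ha⟩
      · exact ⟨List.mem_cons_of_mem _ (ih h).1, (ih h).2⟩

lemma keepD3_mem {w : List ℕ} {x : ℕ} (h : x ∈ keepD3 w) : x ∈ w ∧ 3 ∣ x := by
  induction w with
  | nil => simp [keepD3] at h
  | cons a l ih =>
    by_cases ha : 3 ∣ a
    · rw [show keepD3 (a :: l) = a :: keepD3 l by simp [keepD3, ha]] at h
      rcases List.mem_cons.mp h with rfl | h
      · exact ⟨List.mem_cons_self, ha⟩
      · exact ⟨List.mem_cons_of_mem _ (ih h).1, (ih h).2⟩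
    · rw [show keepD3 (a :: l) = keepD3 l by simp [keepD3, ha]] at h
      exact ⟨List.mem_cons_of_mem _ (ih h).1, (ih h).2⟩

lemma keepN_eq_self {w : List ℕ} (h : ∀ x ∈ w, ¬ 3 ∣ x) : keepN w = w := by
  induction w with
  | nil => rfl
  | cons a l ih =>
    rw [show keepN (a :: l) = a :: keepN l by simp [keepN, h a (List.mem_cons_self)]]
    rw [ih (fun x hx => h x (List.mem_cons_of_mem _ hx))]

lemma keepN_eq_nil {w : List ℕ} (h : ∀ x ∈ w, 3 ∣ x) : keepN w = [] := by
  induction w with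
  | nil => rfl
  | cons a l ih =>
    rw [show keepN (a :: l) = keepN l by simp [keepN, h a (List.mem_cons_self)]]
    exact ih (fun x hx => h x (List.mem_cons_of_mem _ hx))

lemma keepD3_eq_self {w : List ℕ} (h : ∀ x ∈ w, 3 ∣ x) : keepD3 w = w := by
  induction w with
  | nil => rfl
  | cons a l ih =>
    rw [show keepD3 (a :: l) = a :: keepD3 l by simp [keepD3, h a (List.mem_cons_self)]]
    rw [ih (fun x hx => h x (List.mem_cons_of_mem _ hx))]

lemma keepD3_eq_nil {w : List ℕ} (h : ∀ x ∈ w, ¬ 3 ∣ x) : keepD3 w = [] := by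
  induction w with
  | nil => rfl
  | cons a l ih =>
    rw [show keepD3 (a :: l) = keepD3 l by simp [keepD3, h a (List.mem_cons_self)]]
    exact ih (fun x hx => h x (List.mem_cons_of_mem _ hx))

lemma keepN_append (u v : List ℕ) : keepN (u ++ v) = keepN u ++ keepN v := by
  induction u with
  | nil => rfl
  | cons a l ih =>
    by_cases ha : 3 ∣ a
    · rw [List.cons_append, show keepN (a :: (l ++ v)) = keepN (l ++ v) by simp [keepN, ha],
        show keepN (a :: l) = keepN l by simp [keepN, ha], ih]
    · rw [List.cons_append, show keepN (a :: (l ++ v)) = a :: keepN (l ++ v) by simp [keepN, ha],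
        show keepN (a :: l) = a :: keepN l by simp [keepN, ha], ih, List.cons_append]

lemma keepD3_append (u v : List ℕ) : keepD3 (u ++ v) = keepD3 u ++ keepD3 v := by
  induction u with
  | nil => rfl
  | cons a l ih =>
    by_cases ha : 3 ∣ a
    · rw [List.cons_append, show keepD3 (a :: (l ++ v)) = a :: keepD3 (l ++ v) by
        simp [keepD3, ha],
        show keepD3 (a :: l) = a :: keepD3 l by simp [keepD3, ha], ih, List.cons_append]
    · rw [List.cons_append, show keepD3 (a :: (l ++ v)) = keepD3 (l ++ v) by simp [keepD3, ha],
        show keepD3 (a :: l) = keepD3 l by simp [keepD3, ha], ih]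

lemma keepN_perm {l l' : List ℕ} (h : l.Perm l') : (keepN l).Perm (keepN l') := by
  induction h with
  | nil => exact List.Perm.nil
  | cons x h ih =>
    simp only [keepN]
    split_ifs with hx
    · exact ih
    · exact ih.cons x
  | swap x y l =>
    simp only [keepN]
    split_ifs <;>
      first
        | exact List.Perm.refl _
        | exact List.Perm.swap _ _ _
  | trans h1 h2 ih1 ih2 => exact ih1.trans ih2

lemma keepD3_perm {l l' : List ℕ} (h : l.Perm l') : (keepD3 l).Perm (keepD3 l') := by
  induction h with
  | nil => exact List.Perm.nil
  | cons x h ih =>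
    simp only [keepD3]
    split_ifs with hx
    · exact ih.cons x
    · exact ih
  | swap x y l =>
    simp only [keepD3]
    split_ifs <;>
      first
        | exact List.Perm.refl _
        | exact List.Perm.swap _ _ _
  | trans h1 h2 ih1 ih2 => exact ih1.trans ih2

lemma map_mul_sorted {β : List ℕ} (h : β.Pairwise (· < ·)) :
    (β.map (fun x => 3*x)).Pairwise (· ≤ ·) :=
  List.pairwise_map.mpr (h.imp (fun hab => by omega))

lemma div3_pairwise {l : List ℕ} (h1 : l.Pairwise (· ≤ ·)) (h2 : l.Pairwise ne3)
    (h3 : ∀ x ∈ l, 3 ∣ x) : (l.map (fun x => x/3)).Pairwise (· < ·) := by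
  refine List.pairwise_map.mpr ?_
  have hand := List.Pairwise.and h1 h2
  refine hand.imp_of_mem ?_
  intro a b ha hb hab
  have hda := h3 a ha
  have hdb := h3 b hb
  have hne : a ≠ b := fun h => hab.2 ⟨hda, hdb, h⟩
  have hle := hab.1
  omega

lemma map3_sum {l : List ℕ} (h : ∀ x ∈ l, 3 ∣ x) : 3 * (l.map (fun x => x/3)).sum = l.sum := by
  induction l with
  | nil => simp
  | cons a tl ih =>
    have hda := h a (List.mem_cons_self)
    simp only [List.map_cons, List.sum_cons]
    rw [Nat.mul_add, ih (fun x hx => h x (List.mem_cons_of_mem _ hx))]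
    omega

lemma map3_div3 {l : List ℕ} (h : ∀ x ∈ l, 3 ∣ x) :
    (l.map (fun x => x/3)).map (fun x => 3*x) = l := by
  induction l with
  | nil => simp
  | cons a tl ih =>
    have hda := h a (List.mem_cons_self)
    simp only [List.map_cons, ih (fun x hx => h x (List.mem_cons_of_mem _ hx))]
    congr 1
    omega

lemma chain'_schurAdj {l : List ℕ} (hs : List.Pairwise (· ≤ ·) l)
    (hp : l.Pairwise SchurRel) : l.IsChain schurAdj := by
  induction l with
  | nil => exact List.IsChain.nil
  | cons a tail ih =>
    have iht := ih (List.pairwise_cons.mp hs).2 (List.pairwise_cons.mp hp).2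
    cases tail with
    | nil => exact List.isChain_singleton a
    | cons m rest =>
      refine List.isChain_cons_cons.mpr ⟨?_, iht⟩
      have ham : a ≤ m := (List.pairwise_cons.mp hs).1 m (List.mem_cons_self)
      have hrel : SchurRel a m := (List.pairwise_cons.mp hp).1 m (List.mem_cons_self)
      obtain ⟨hr1, hr2⟩ := hrel
      constructor
      · omega
      · intro h3a h3m
        have := hr2 h3a h3m
        omega

lemma yToS_bijective (n : ℕ) : Function.Bijective (yToS n) := by
  constructor
  · rintro ⟨⟨α, β⟩, hY⟩ ⟨⟨α', β'⟩, hY'⟩ heq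
    obtain ⟨hs, hm, hp, hlen, hsum⟩ := wList_spec hY
    obtain ⟨hs', hm', hp', hlen', hsum'⟩ := wList_spec hY'
    have hparts : (srealize (wList (α, β)) 0 : Multiset ℕ)
        = (srealize (wList (α', β')) 0 : Multiset ℕ) := by
      have := congrArg (fun q => q.1.parts) heq
      simpa [yToS] using this
    have hlist : srealize (wList (α, β)) 0 = srealize (wList (α', β')) 0 :=
      List.Perm.eq_of_pairwise' (srealize_sorted hs hp)
        (srealize_sorted hs' hp') (Multiset.coe_eq_coe.mp hparts)
    have hw : wList (α, β) = wList (α', β') := srealize_injective hlist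
    -- recover α and β from the wList permutation
    have hperm : (α ++ β.map (fun x => 3*x)).Perm (α' ++ β'.map (fun x => 3*x)) :=
      ((wList_perm (α, β)).symm.trans (hw ▸ wList_perm (α', β')))
    have hN : keepN (α ++ β.map (fun x => 3*x)) = α := by
      rw [keepN_append, keepN_eq_self (fun x hx => (hY.2.1 x hx).2),
        keepN_eq_nil (fun x hx => by
          obtain ⟨b, _, rfl⟩ := List.mem_map.mp hx; exact ⟨b, rfl⟩)]
      simp
    have hN' : keepN (α' ++ β'.map (fun x => 3*x)) = α' := by
      rw [keepN_append, keepN_eq_self (fun x hx => (hY'.2.1 x hx).2),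
        keepN_eq_nil (fun x hx => by
          obtain ⟨b, _, rfl⟩ := List.mem_map.mp hx; exact ⟨b, rfl⟩)]
      simp
    have hD : keepD3 (α ++ β.map (fun x => 3*x)) = β.map (fun x => 3*x) := by
      rw [keepD3_append, keepD3_eq_nil (fun x hx => (hY.2.1 x hx).2),
        keepD3_eq_self (fun x hx => by
          obtain ⟨b, _, rfl⟩ := List.mem_map.mp hx; exact ⟨b, rfl⟩)]
      simp
    have hD' : keepD3 (α' ++ β'.map (fun x => 3*x)) = β'.map (fun x => 3*x) := by
      rw [keepD3_append, keepD3_eq_nil (fun x hx => (hY'.2.1 x hx).2),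
        keepD3_eq_self (fun x hx => by
          obtain ⟨b, _, rfl⟩ := List.mem_map.mp hx; exact ⟨b, rfl⟩)]
      simp
    have hαperm : α.Perm α' := by
      rw [← hN, ← hN']
      exact keepN_perm hperm
    have hβperm : (β.map (fun x => 3*x)).Perm (β'.map (fun x => 3*x)) := by
      rw [← hD, ← hD']
      exact keepD3_perm hperm
    have e1 : α = α' := List.Perm.eq_of_pairwise' hY.1 hY'.1 hαperm
    have e2 : β = β' := by
      have := List.Perm.eq_of_pairwise' (map_mul_sorted hY.2.2.1)
        (map_mul_sorted hY'.2.2.1) hβperm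
      exact List.map_injective_iff.mpr (fun a b h => by omega) this
    subst e1; subst e2
    rfl
  · rintro ⟨p, hschur⟩
    set l := Multiset.sort p.parts (· ≤ ·) with hldef
    have hperm : (l : Multiset ℕ) = p.parts := Multiset.sort_eq _ _
    have hsorted : List.Pairwise (· ≤ ·) l := Multiset.pairwise_sort _ _
    obtain ⟨l₀, hl₀, hpw₀⟩ := hschur
    have hpl : l.Pairwise SchurRel := by
      have hp2 : l.Perm l₀ := Multiset.coe_eq_coe.mp (by rw [hperm, hl₀])
      exact (hp2.pairwise_iff (fun h => schurRel_symm h)).mpr hpw₀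
    have hchain : l.IsChain schurAdj := chain'_schurAdj hsorted hpl
    have hpos : ∀ a ∈ l, 1 ≤ a := by
      intro a ha
      exact p.parts_pos (by rw [← hperm]; exact_mod_cast ha)
    obtain ⟨hw1, hw2, hw3, hw4⟩ := sparse_spec (c := 0) hchain
      (fun a ha => by
        have := hpos a (List.mem_of_mem_head? ha)
        omega)
    set w := sparse l 0 with hwdef
    have hwpw : w.Pairwise ne3 := sorted_chain_pairwise_ne3 hw2 hw4
    have hkperm := keep_perm w
    have hdmem : ∀ x ∈ keepD3 w, 3 ∣ x := fun x hx => (keepD3_mem hx).2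
    have hkNs : (keepN w).Pairwise (· ≤ ·) := hw2.sublist (keepN_sublist w)
    have hkDs : (keepD3 w).Pairwise (· ≤ ·) := hw2.sublist (keepD3_sublist w)
    have hkDp : (keepD3 w).Pairwise ne3 := hwpw.sublist (keepD3_sublist w)
    refine ⟨⟨(keepN w, (keepD3 w).map (fun x => x/3)), hkNs, ?_, ?_, ?_, ?_⟩, ?_⟩
    · intro x hx
      obtain ⟨hxw, hx3⟩ := keepN_mem hx
      exact ⟨hw3 x hxw, hx3⟩
    · exact div3_pairwise hkDs hkDp hdmem
    · intro b hb
      obtain ⟨x, hx, rfl⟩ := List.mem_map.mp hb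
      obtain ⟨hxw, hx3⟩ := keepD3_mem hx
      have := hw3 x hxw
      omega
    · -- weight
      show (keepN w).sum + 3 * ((keepD3 w).map (fun x => x/3)).sum
          + 3 * Nat.choose ((keepN w).length + ((keepD3 w).map (fun x => x/3)).length) 2 = n
      rw [map3_sum hdmem, List.length_map]
      have hlen : (keepN w).length + (keepD3 w).length = w.length := by
        have := hkperm.length_eq
        simpa using this
      have hsum : (keepN w).sum + (keepD3 w).sum = w.sum := by
        have := hkperm.sum_eq
        simpa using this
      have hlsum : l.sum = n := by
        have : (l : Multiset ℕ).sum = n := by rw [hperm]; exact p.parts_sum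
        simpa using this
      have hsre := srealize_sum w 0
      rw [hw1] at hsre
      rw [hlen]
      omega
    · -- yToS evaluates back to p
      apply Subtype.ext
      apply Nat.Partition.ext
      show ((srealize (wList (keepN w, (keepD3 w).map (fun x => x/3))) 0 : List ℕ)
          : Multiset ℕ) = p.parts
      have hwl : wList (keepN w, (keepD3 w).map (fun x => x/3)) = w := by
        refine List.Perm.eq_of_pairwise' (Multiset.pairwise_sort _ _) hw2 ?_
        refine (wList_perm _).trans ?_
        show (keepN w ++ ((keepD3 w).map (fun x => x/3)).map (fun x => 3*x)).Perm w
        rw [map3_div3 hdmem]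
        exact hkperm
      rw [hwl, hw1, hperm]

end SchurProof

/-- The number of partitions of `n` satisfying Schur's condition equals the number of
partitions of `n` into distinct parts, none divisible by 3. -/
theorem schur_eq_distinct_nondiv_three (n : ℕ) :
    Nat.card {p : n.Partition // SchurParts p.parts} =
    Nat.card {p : n.Partition // p.parts.Nodup ∧ ∀ x ∈ p.parts, ¬ 3 ∣ x} := by
  rw [← Nat.card_congr (Equiv.ofBijective _ (SchurProof.yToS_bijective n)),
    ← Nat.card_congr (Equiv.ofBijective _ (SchurProof.yToD_bijective n))]
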